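/- arXiv:2412.18958 — 2 statements merged into one kernel-verified Lean document; each statement's English description precedes it below -/
import Mathlib

section
/- For every m ≥ 0 the polynomial identity (L_{2m+1}(x) − 2)·(x − 2) = (L_{m+1}(x) − L_m(x))² holds in ℤ[x]. -/
open Polynomial

/-- The Lucas polynomials: `L 0 = 2`, `L 1 = X`, `L (n+2) = X * L (n+1) - L n`. -/
noncomputable def lucasPoly : ℕ → Polynomial ℤ
  | 0 => 2
  | 1 => X
  | n + 2 => X * lucasPoly (n + 1) - lucasPoly n

/-- The zpread polynomials `Z n = 2 - L n (2 - X)`. -/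
noncomputable def zpread (n : ℕ) : Polynomial ℤ := 2 - (lucasPoly n).comp (2 - X)

lemma lucas_rec (n : ℕ) : lucasPoly (n + 2) = X * lucasPoly (n + 1) - lucasPoly n := rfl

lemma lucas_mul : ∀ n m : ℕ,
    lucasPoly (m + n) * lucasPoly n = lucasPoly (m + 2 * n) + lucasPoly m := by
  intro n
  induction n using Nat.twoStepInduction with
  | zero => intro m; simp [lucasPoly]; ring
  | one =>
    intro m
    have h := lucas_rec m
    simp only [lucasPoly] at *
    linear_combination X * h
  | more n ih1 ih2 =>
    intro m
    have h1 := ih2 (m + 1)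
    have h2 := ih1 (m + 2)
    have e1 : m + (n + 2) = m + 1 + (n + 1) := by omega
    have e2 : m + 2 * (n + 2) = (m + 2 + 2 * n) + 2 := by omega
    have e3 : m + 1 + 2 * (n + 1) = (m + 2 + 2 * n) + 1 := by omega
    have e4 : m + 1 + (n + 1) = (m + 2 + n) := by omega
    have r2 : lucasPoly (m + 2 * (n + 2)) =
        X * lucasPoly (m + 2 + 2 * n + 1) - lucasPoly (m + 2 + 2 * n) := by
      rw [e2]; exact lucas_rec _
    have r3 : lucasPoly (m + 2) = X * lucasPoly (m + 1) - lucasPoly m := lucas_rec m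
    rw [e3, e4] at h1
    rw [lucas_rec n, e1, e4, r2]
    linear_combination X * h1 - h2 - r3

/-- `(L (2m+1) - 2) * (X - 2) = (L (m+1) - L m)^2` in `ℤ[X]`. -/
theorem lucas_odd_sub_two_mul (m : ℕ) :
    (lucasPoly (2 * m + 1) - 2) * (X - 2) = (lucasPoly (m + 1) - lucasPoly m) ^ 2 := by
  have hsq1 : lucasPoly (m + 1) * lucasPoly (m + 1) = lucasPoly (2 * (m + 1)) + 2 := by
    have := lucas_mul (m + 1) 0
    simpa [lucasPoly] using this
  have hsq2 : lucasPoly m * lucasPoly m = lucasPoly (2 * m) + 2 := by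
    have := lucas_mul m 0
    simpa [lucasPoly] using this
  have hprod : lucasPoly (m + 1) * lucasPoly m = lucasPoly (2 * m + 1) + X := by
    have := lucas_mul m 1
    have e : 1 + m = m + 1 := by omega
    have e2 : 1 + 2 * m = 2 * m + 1 := by omega
    rw [e, e2] at this
    simpa [lucasPoly] using this
  have hrec : lucasPoly (2 * m + 2) = X * lucasPoly (2 * m + 1) - lucasPoly (2 * m) :=
    lucas_rec (2 * m)
  have e : 2 * (m + 1) = 2 * m + 2 := by omega
  rw [e] at hsq1
  linear_combination 2 * hprod - hsq1 - hsq2 - hrec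
end

section
/- For every k ≥ 3, the polynomials φ indexed by powers of 2 satisfy the recursion φ_{2^k}(x) = (φ_{2^{k−1}}(x))² − 2, an identity in ℝ[x]. Moreover, for every n ≥ 1, φ_{2^{n+1}}(x²) = L_{2^n}(x) in ℝ[x]. -/
open Polynomial

/-- `phiPoly n` : for `n ≥ 3`, the polynomial `∏_{0 < k < n/2, gcd(k,n)=1} (X - 4 sin²(kπ/n))` in `ℝ[X]`,
with `phiPoly 1 = X` and `phiPoly 2 = X - 4`. -/
noncomputable def phiPoly : ℕ → Polynomial ℝ
  | 1 => X
  | 2 => X - 4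
  | n => ∏ k ∈ Finset.filter (fun k => 0 < k ∧ 2 * k < n ∧ Nat.gcd k n = 1) (Finset.range n),
      (X - C (4 * (Real.sin ((k : ℝ) * Real.pi / (n : ℝ)))^2))

noncomputable def mapL (n : ℕ) : Polynomial ℝ := (lucasPoly n).map (Int.castRingHom ℝ)

lemma mapL_zero : mapL 0 = 2 := by simp [mapL, lucasPoly]
lemma mapL_one : mapL 1 = X := by simp [mapL, lucasPoly]
lemma mapL_add_two (n : ℕ) : mapL (n+2) = X * mapL (n+1) - mapL n := by
  simp [mapL, lucasPoly, Polynomial.map_sub, Polynomial.map_mul]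

lemma lucas_eval : ∀ (n : ℕ) (θ : ℝ),
    (mapL n).eval (2 * Real.cos θ) = 2 * Real.cos (n * θ)
  | 0, θ => by simp [mapL_zero]
  | 1, θ => by simp [mapL_one]
  | (n+2), θ => by
    have h1 := lucas_eval (n+1) θ
    have h2 := lucas_eval n θ
    rw [mapL_add_two]
    simp only [eval_sub, eval_mul, eval_X, h1, h2]
    have e1 : (((n:ℕ)+2 : ℕ):ℝ) * θ = ((n:ℝ)+1) * θ + θ := by push_cast; ring
    have e2 : (n:ℝ) * θ = ((n:ℝ)+1) * θ - θ := by ring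
    rw [e1, e2, Real.cos_add, Real.cos_sub]
    push_cast
    ring

lemma mapL_monic : ∀ n : ℕ, 1 ≤ n → (mapL n).Monic ∧ (mapL n).natDegree = n
  | 1, _ => by constructor <;> simp [mapL_one, monic_X]
  | (n+2), _ => by
    have hpos : 1 ≤ n + 1 := by omega
    obtain ⟨hm, hd⟩ := mapL_monic (n+1) hpos
    rw [mapL_add_two n]
    have hmx : (X * mapL (n+1)).Monic := monic_X.mul hm
    have hdx : (X * mapL (n+1)).natDegree = n+2 := by
      rw [natDegree_X_mul hm.ne_zero, hd]
    have hq : (mapL n).natDegree < (X * mapL (n+1)).natDegree := by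
      rcases Nat.eq_zero_or_pos n with h0 | h0
      · subst h0; rw [hdx, mapL_zero]
        simp [natDegree_ofNat]
      · obtain ⟨_, hd'⟩ := mapL_monic n h0
        omega
    constructor
    · have := hmx.add_of_left (q := -(mapL n)) (by rw [degree_neg]; exact degree_lt_degree hq)
      simpa [sub_eq_add_neg] using this
    · rw [natDegree_sub_eq_left_of_natDegree_lt hq, hdx]

lemma phiPoly_eq (n : ℕ) (h : 3 ≤ n) :
    phiPoly n = ∏ k ∈ Finset.filter (fun k => 0 < k ∧ 2 * k < n ∧ Nat.gcd k n = 1)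
      (Finset.range n), (X - C (4 * (Real.sin ((k : ℝ) * Real.pi / (n : ℝ)))^2)) := by
  rcases n with _|_|_|n
  · omega
  · omega
  · omega
  · rfl

lemma two_sub_X_eq : (2 - X : ℝ[X]) = -(X - C 2) := by
  have h : (2:ℝ[X]) = C 2 := rfl
  rw [h]; ring

lemma key (m : ℕ) (hm : 3 ≤ m) :
    phiPoly (2^m) = (mapL (2^(m-2))).comp (2 - X) := by
  have hNj : 2^m = 4 * 2^(m-2) := by
    have h2 : m - 2 + 2 = m := by omega
    calc 2^m = 2^(m-2+2) := by rw [h2]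
    _ = 4 * 2^(m-2) := by rw [pow_add]; ring
  set N := 2^m with hN
  set j := 2^(m-2) with hj
  have hjpos : 0 < j := Nat.pow_pos (by norm_num : 0 < 2)
  have hjeven : Even j := by
    rw [hj]
    exact (Nat.even_pow' (by omega)).mpr (by norm_num)
  set S := Finset.filter (fun k => 0 < k ∧ 2 * k < N ∧ Nat.gcd k N = 1) (Finset.range N) with hS
  set r : ℕ → ℝ := fun k => 4 * (Real.sin ((k : ℝ) * Real.pi / (N : ℝ)))^2 with hr
  have hmemS : ∀ k, k ∈ S ↔ 0 < k ∧ 2 * k < N ∧ Nat.gcd k N = 1 := by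
    intro k
    rw [hS, Finset.mem_filter, Finset.mem_range]
    constructor
    · rintro ⟨-, h⟩; exact h
    · rintro ⟨h1, h2, h3⟩; exact ⟨by omega, h1, h2, h3⟩
  have hodd : ∀ k ∈ S, Odd k := by
    intro k hk
    obtain ⟨-, -, h3⟩ := (hmemS k).mp hk
    have : Nat.Coprime k N := h3
    rw [hN] at this
    rw [Nat.coprime_pow_right_iff (by omega)] at this
    exact Nat.coprime_two_right.mp this
  -- q is monic of degree j
  obtain ⟨hLm, hLd⟩ := mapL_monic j hjpos
  set q : ℝ[X] := (mapL j).comp (2 - X) with hq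
  have hdeg2X : (2 - X : ℝ[X]).natDegree = 1 := by
    rw [two_sub_X_eq, natDegree_neg, natDegree_X_sub_C]
  have hlc2X : (2 - X : ℝ[X]).leadingCoeff = -1 := by
    rw [two_sub_X_eq, leadingCoeff_neg, leadingCoeff_X_sub_C]
  have hqm : q.Monic := by
    show q.leadingCoeff = 1
    rw [hq, leadingCoeff_comp (by rw [hdeg2X]; norm_num), hlc2X, hLm.leadingCoeff, hLd,
      hjeven.neg_one_pow, one_mul]
  have hqd : q.natDegree = j := by
    rw [hq, natDegree_comp, hdeg2X, hLd, mul_one]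
  -- each r k, k ∈ S, is a root of q
  have hroot : ∀ k ∈ S, q.IsRoot (r k) := by
    intro k hk
    obtain ⟨h1, h2, -⟩ := (hmemS k).mp hk
    obtain ⟨i, hi⟩ := hodd k hk
    have hNpos : (0:ℝ) < (N:ℝ) := by positivity
    set a : ℝ := (k : ℝ) * Real.pi / (N : ℝ) with ha
    have h2r : 2 - r k = 2 * Real.cos (2 * a) := by
      have hc := Real.cos_two_mul a
      have hs := Real.sin_sq_add_cos_sq a
      rw [hr]; simp only []
      linarith
    show q.eval (r k) = 0
    rw [hq, eval_comp]
    simp only [eval_sub, eval_X, eval_ofNat]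
    rw [show ((2:ℝ) - r k) = 2 * Real.cos (2*a) by exact h2r]
    rw [lucas_eval j (2*a)]
    have harg : (j:ℝ) * (2*a) = (i:ℝ) * Real.pi + Real.pi / 2 := by
      rw [ha]
      have hNR : (N:ℝ) = 4 * (j:ℝ) := by exact_mod_cast hNj
      have hkR : (k:ℝ) = 2*(i:ℝ)+1 := by exact_mod_cast hi
      have hjne : (j:ℝ) ≠ 0 := by positivity
      rw [hNR, hkR]
      field_simp
      ring
    rw [harg, Real.cos_add_pi_div_two, Real.sin_nat_mul_pi, neg_zero, mul_zero]
  -- r is strictly monotone on S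
  have hrmono : ∀ k ∈ S, ∀ k' ∈ S, k < k' → r k < r k' := by
    intro k hk k' hk' hlt
    obtain ⟨h1, h2, -⟩ := (hmemS k).mp hk
    obtain ⟨h1', h2', -⟩ := (hmemS k').mp hk'
    have hNpos : (0:ℝ) < (N:ℝ) := by positivity
    have hbound : ∀ l : ℕ, 0 < l → 2*l < N → (l:ℝ) * Real.pi / (N:ℝ) ∈ Set.Icc (-(Real.pi/2)) (Real.pi/2) := by
      intro l hl hlN
      have hpi := Real.pi_pos
      constructor
      · have : (0:ℝ) ≤ (l:ℝ) * Real.pi / (N:ℝ) := by positivity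
        linarith
      · rw [div_le_iff₀ hNpos]
        have : (2*l : ℝ) ≤ (N:ℝ) := by exact_mod_cast hlN.le
        nlinarith [(Nat.cast_pos (α := ℝ)).mpr hl]
    have hsin : Real.sin ((k:ℝ) * Real.pi / (N:ℝ)) < Real.sin ((k':ℝ) * Real.pi / (N:ℝ)) := by
      apply Real.strictMonoOn_sin (hbound k h1 h2) (hbound k' h1' h2')
      have hpi := Real.pi_pos
      have hkk : (k:ℝ) < (k':ℝ) := by exact_mod_cast hlt
      gcongr
    have hsn : 0 ≤ Real.sin ((k:ℝ) * Real.pi / (N:ℝ)) := by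
      apply Real.sin_nonneg_of_nonneg_of_le_pi
      · positivity
      · have := (hbound k h1 h2).2
        have hpi := Real.pi_pos
        linarith
    rw [hr]
    have := pow_lt_pow_left₀ hsin hsn (n := 2) (by norm_num)
    simp only []
    linarith
  have hinj : ∀ k ∈ S, ∀ k' ∈ S, r k = r k' → k = k' := by
    intro k hk k' hk' he
    rcases lt_trichotomy k k' with h | h | h
    · exact absurd he (hrmono k hk k' hk' h).ne
    · exact h
    · exact absurd he.symm (hrmono k' hk' k hk h).ne
  -- S has cardinality j
  have hScard : S.card = j := by
    have himg : S = (Finset.range j).image (fun i => 2*i+1) := by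
      ext k
      rw [hmemS, Finset.mem_image]
      constructor
      · rintro ⟨h1, h2, h3⟩
        have hodd' : Odd k := by
          have : Nat.Coprime k N := h3
          rw [hN, Nat.coprime_pow_right_iff (by omega)] at this
          exact Nat.coprime_two_right.mp this
        obtain ⟨i, hi⟩ := hodd'
        exact ⟨i, Finset.mem_range.mpr (by omega), by omega⟩
      · rintro ⟨i, hi, rfl⟩
        rw [Finset.mem_range] at hi
        refine ⟨by omega, by omega, ?_⟩
        have : Nat.Coprime (2*i+1) 2 := Nat.coprime_two_right.mpr ⟨i, by omega⟩
        have := this.pow_right m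
        rwa [hN]
    rw [himg, Finset.card_image_of_injective _ (fun a b h => by omega), Finset.card_range]
  -- the product divides q
  have hq0 : q ≠ 0 := hqm.ne_zero
  set M : Multiset ℝ := S.val.map r with hM
  have hnodup : M.Nodup := Multiset.Nodup.map_on hinj S.nodup
  have hle : M ≤ q.roots := by
    rw [Multiset.le_iff_subset hnodup]
    intro a haM
    obtain ⟨k, hk, rfl⟩ := Multiset.mem_map.mp haM
    exact (mem_roots hq0).mpr (hroot k hk)
  have hdvd : (M.map (fun a => X - C a)).prod ∣ q :=
    (Multiset.prod_X_sub_C_dvd_iff_le_roots hq0 M).mpr hle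
  have hprodeq : (M.map (fun a => X - C a)).prod = ∏ k ∈ S, (X - C (r k)) := by
    rw [hM, Multiset.map_map]
    rfl
  rw [hprodeq] at hdvd
  have hpm : (∏ k ∈ S, (X - C (r k))).Monic :=
    monic_prod_of_monic _ _ (fun k _ => monic_X_sub_C _)
  have hpd : (∏ k ∈ S, (X - C (r k))).natDegree = j := by
    rw [natDegree_prod _ _ (fun k _ => X_sub_C_ne_zero _)]
    simp [natDegree_X_sub_C, hScard]
  have := eq_of_monic_of_dvd_of_natDegree_le hpm hqm hdvd (by rw [hqd, hpd])
  rw [phiPoly_eq N (by rw [hN]; have : 2^3 ≤ 2^m := Nat.pow_le_pow_right (by norm_num) hm; omega)]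
  rw [← hS, ← hr] at *
  rw [← this]

lemma mapL_two : mapL 2 = X^2 - 2 := by
  rw [mapL_add_two 0, mapL_one, mapL_zero]; ring

lemma lucas_double (j : ℕ) : mapL (2*j) = (mapL j)^2 - 2 := by
  apply eq_of_infinite_eval_eq
  apply Set.Infinite.mono (s := Set.Icc (-2:ℝ) 2) ?_ (Set.Icc_infinite (by norm_num))
  intro x hx
  obtain ⟨hx1, hx2⟩ := hx
  have hc : 2 * Real.cos (Real.arccos (x/2)) = x := by
    rw [Real.cos_arccos (by linarith) (by linarith)]; ring
  show eval x _ = eval x _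
  rw [← hc]
  simp only [eval_sub, eval_pow, eval_ofNat]
  rw [lucas_eval, lucas_eval]
  have e : ((2*j:ℕ):ℝ) * Real.arccos (x/2) = 2 * ((j:ℝ) * Real.arccos (x/2)) := by
    push_cast; ring
  rw [e, Real.cos_two_mul]
  ring

lemma lucas_flip (j : ℕ) (hj : Even j) : (mapL j).comp (2 - X^2) = mapL (2*j) := by
  obtain ⟨i, hi⟩ := hj
  apply eq_of_infinite_eval_eq
  apply Set.Infinite.mono (s := Set.Icc (-2:ℝ) 2) ?_ (Set.Icc_infinite (by norm_num))
  intro x hx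
  obtain ⟨hx1, hx2⟩ := hx
  have hc : 2 * Real.cos (Real.arccos (x/2)) = x := by
    rw [Real.cos_arccos (by linarith) (by linarith)]; ring
  set θ := Real.arccos (x/2) with hθ
  show eval x _ = eval x _
  rw [← hc, eval_comp]
  simp only [eval_sub, eval_pow, eval_ofNat, eval_X]
  have h1 : (2:ℝ) - (2*Real.cos θ)^2 = 2 * Real.cos (Real.pi - 2*θ) := by
    rw [Real.cos_pi_sub, Real.cos_two_mul]; ring
  rw [h1, lucas_eval, lucas_eval]
  have h2 : (j:ℝ) * (Real.pi - 2*θ) = (2*i:ℕ) * Real.pi - ((2*j:ℕ)*θ) := by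
    push_cast [hi]; ring
  rw [h2, Real.cos_sub]
  have h3 : Real.cos ((2*i:ℕ) * Real.pi) = 1 := by
    have : ((2*i:ℕ):ℝ) * Real.pi = (i:ℝ) * (2*Real.pi) := by push_cast; ring
    rw [this, Real.cos_nat_mul_two_pi]
  have h4 : Real.sin ((2*i:ℕ) * Real.pi) = 0 := Real.sin_nat_mul_pi (2*i)
  rw [h3, h4]
  ring

lemma phi_four : phiPoly 4 = X - 2 := by
  rw [phiPoly_eq 4 (by norm_num)]
  have hfil : Finset.filter (fun k => 0 < k ∧ 2 * k < 4 ∧ Nat.gcd k 4 = 1) (Finset.range 4)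
      = {1} := by decide
  rw [hfil, Finset.prod_singleton]
  have : 4 * (Real.sin (((1:ℕ):ℝ) * Real.pi / ((4:ℕ):ℝ)))^2 = 2 := by
    push_cast
    rw [one_mul, Real.sin_pi_div_four]
    rw [div_pow, Real.sq_sqrt (by norm_num : (0:ℝ) ≤ 2)]
    norm_num
  rw [this]
  norm_num
  rfl

/-- For `k ≥ 3`: `φ_{2^k}(x) = (φ_{2^{k-1}}(x))² - 2`, and for `n ≥ 1`:
`φ_{2^{n+1}}(x²) = L_{2^n}(x)`, as identities in `ℝ[X]`. -/
theorem phi_pow_two :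
    (∀ k : ℕ, 3 ≤ k → phiPoly (2 ^ k) = (phiPoly (2 ^ (k - 1))) ^ 2 - 2) ∧
    (∀ n : ℕ, 1 ≤ n →
      (phiPoly (2 ^ (n + 1))).comp (X ^ 2) = (lucasPoly (2 ^ n)).map (Int.castRingHom ℝ)) := by
  constructor
  · intro k hk
    rcases eq_or_lt_of_le hk with h3 | h4
    · -- k = 3
      rw [← h3]
      rw [key 3 (by norm_num)]
      rw [show (2:ℕ)^(3-2) = 2 from rfl, mapL_two]
      have h4 : phiPoly (2^(3-1)) = X - 2 := by norm_num [phi_four]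
      rw [h4]
      simp [sub_comp, pow_comp, X_comp]
      ring
    · -- k ≥ 4
      have hk4 : 4 ≤ k := h4
      rw [key k hk, key (k-1) (by omega)]
      have hsplit : 2^(k-2) = 2 * 2^(k-3) := by
        have h : k - 2 = (k-3) + 1 := by omega
        rw [h, pow_succ]; ring
      have hidx : k - 1 - 2 = k - 3 := by omega
      rw [hsplit, lucas_double, hidx]
      simp [sub_comp, pow_comp]
  · intro n hn
    rcases eq_or_lt_of_le hn with h1 | h2
    · -- n = 1
      rw [← h1]
      norm_num [phi_four]
      rw [show map (Int.castRingHom ℝ) (lucasPoly 2) = mapL 2 from rfl, mapL_two]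
    · -- n ≥ 2
      have hn2 : 2 ≤ n := h2
      rw [key (n+1) (by omega)]
      have hidx : n + 1 - 2 = n - 1 := by omega
      rw [hidx]
      have heven : Even (2^(n-1)) := (Nat.even_pow' (by omega)).mpr (by norm_num)
      rw [show ((lucasPoly (2^n)).map (Int.castRingHom ℝ)) = mapL (2^n) from rfl]
      have h2n : 2^n = 2 * 2^(n-1) := by
        have h : n = (n-1) + 1 := by omega
        conv_lhs => rw [h]
        rw [pow_succ]; ring
      rw [h2n, ← lucas_flip _ heven, comp_assoc]
      congr 1
      simp [sub_comp, pow_comp, X_comp]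
end
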